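/- For all real numbers p, q, r with p, q, r each in the interval [0,1], the probability that the triangle is balanced satisfies min(p, 1-p) ≤ P_bal(p,q,r) ≤ max(p, 1-p). -/

import Mathlib

/-!
A triangle is balanced exactly when the sign of the first edge agrees with the parity of the
other two, so `Pbal p q r = sameSignProb p (sameSignProb q r)`. Now `sameSignProb x y` is a
convex combination of `x` and `1 - x` with weights `y` and `1 - y`, hence lies between them
whenever `y ∈ [0, 1]`; applied to the inner factor this puts `sameSignProb q r` in `[0, 1]`,
and applied to the outer one it gives the claim.
-/

/-- Probability that a triangle with positive-sign probabilities p, q, r is balanced. -/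
def Pbal (p q r : ℝ) : ℝ :=
  p*q*r + p*(1-q)*(1-r) + (1-p)*q*(1-r) + (1-p)*(1-q)*r

/-- Probability that a triangle with positive-sign probabilities p, q, r is unbalanced. -/
def Punbal (p q r : ℝ) : ℝ :=
  (1-p)*(1-q)*(1-r) + p*q*(1-r) + p*(1-q)*r + (1-p)*q*r

/-- The probability that two independent signs, positive with probabilities `x` and `y`,
agree. -/
def sameSignProb (x y : ℝ) : ℝ := x * y + (1 - x) * (1 - y)

lemma Pbal_eq_sameSignProb (p q r : ℝ) : Pbal p q r = sameSignProb p (sameSignProb q r) := by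
  unfold Pbal sameSignProb
  ring

lemma sameSignProb_mem_uIcc {y : ℝ} (x : ℝ) (hy : y ∈ Set.Icc (0 : ℝ) 1) :
    sameSignProb x y ∈ Set.uIcc x (1 - x) := by
  rw [← segment_eq_uIcc]
  exact ⟨y, 1 - y, hy.1, sub_nonneg.2 hy.2, add_sub_cancel y 1, by
    simp only [sameSignProb, smul_eq_mul]; ring⟩

lemma sameSignProb_mem_Icc {x y : ℝ} (hx : x ∈ Set.Icc (0 : ℝ) 1) (hy : y ∈ Set.Icc (0 : ℝ) 1) :
    sameSignProb x y ∈ Set.Icc 0 1 :=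
  Set.uIcc_subset_Icc hx ⟨sub_nonneg.2 hx.2, sub_le_self 1 hx.1⟩ (sameSignProb_mem_uIcc x hy)

theorem bal_prob_range_general (p q r : ℝ)
    (hq : q ∈ Set.Icc (0:ℝ) 1) (hr : r ∈ Set.Icc (0:ℝ) 1) :
    min p (1 - p) ≤ Pbal p q r ∧ Pbal p q r ≤ max p (1 - p) := by
  rw [Pbal_eq_sameSignProb]
  exact sameSignProb_mem_uIcc p (sameSignProb_mem_Icc hq hr)

theorem bal_prob_range (p q r : ℝ)
    (hp : p ∈ Set.Icc (0:ℝ) 1) (hq : q ∈ Set.Icc (0:ℝ) 1) (hr : r ∈ Set.Icc (0:ℝ) 1) :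
    min p (1 - p) ≤ Pbal p q r ∧ Pbal p q r ≤ max p (1 - p) :=
  bal_prob_range_general p q r hq hr
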